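/- Let P, Q ∈ Γ_n and let r, R satisfy 0 < r ≤ p_i/q_i ≤ R < ∞ for all i. If s ≤ −1 then (r^{−s}(1+r²)/(4(1+r)))·Φ_s(P||Q) ≤ T(P||Q) ≤ (R^{−s}(1+R²)/(4(1+R)))·Φ_s(P||Q), and if s ≥ 2 then (R^{−s}(1+R²)/(4(1+R)))·Φ_s(P||Q) ≤ T(P||Q) ≤ (r^{−s}(1+r²)/(4(1+r)))·Φ_s(P||Q). -/

import Mathlib

open Real

/-- Relative information of type `s` (Cressie–Read generalization of Kullback–Leibler). -/
noncomputable def Phi {n : ℕ} (s : ℝ) (p q : Fin n → ℝ) : ℝ :=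
  if s = 0 then ∑ i, q i * Real.log (q i / p i)
  else if s = 1 then ∑ i, p i * Real.log (p i / q i)
  else (s * (s - 1))⁻¹ * ((∑ i, p i ^ s * q i ^ (1 - s)) - 1)

/-- Kullback–Leibler relative information `K(P‖Q)`. -/
noncomputable def KL {n : ℕ} (p q : Fin n → ℝ) : ℝ :=
  ∑ i, p i * Real.log (p i / q i)

/-- Relative J-divergence `D(P‖Q)`. -/
noncomputable def relJ {n : ℕ} (p q : Fin n → ℝ) : ℝ :=
  ∑ i, (p i - q i) * Real.log ((p i + q i) / (2 * q i))

/-- Relative JS-divergence `F(P‖Q)`. -/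
noncomputable def relJS {n : ℕ} (p q : Fin n → ℝ) : ℝ :=
  ∑ i, p i * Real.log (2 * p i / (p i + q i))

/-- Relative AG-divergence `G(P‖Q)`. -/
noncomputable def relAG {n : ℕ} (p q : Fin n → ℝ) : ℝ :=
  ∑ i, ((p i + q i) / 2) * Real.log ((p i + q i) / (2 * p i))

/-- J-divergence `J(P‖Q)`. -/
noncomputable def Jdiv {n : ℕ} (p q : Fin n → ℝ) : ℝ :=
  ∑ i, (p i - q i) * Real.log (p i / q i)

/-- JS-divergence (information radius) `I(P‖Q)`. -/
noncomputable def JSdiv {n : ℕ} (p q : Fin n → ℝ) : ℝ :=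
  (relJS p q + relJS q p) / 2

/-- AG-divergence `T(P‖Q)`. -/
noncomputable def AGdiv {n : ℕ} (p q : Fin n → ℝ) : ℝ :=
  (relAG p q + relAG q p) / 2

/-- Hellinger discrimination `h(P‖Q)`. -/
noncomputable def hell {n : ℕ} (p q : Fin n → ℝ) : ℝ :=
  (1 / 2) * ∑ i, (Real.sqrt (p i) - Real.sqrt (q i)) ^ 2



noncomputable def fT (x : ℝ) : ℝ :=
  ((x + 1) / 4) * (2 * Real.log (x + 1) - Real.log 4 - Real.log x)

noncomputable def fT1 (x : ℝ) : ℝ :=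
  (1 / 4) * (2 * Real.log (x + 1) - Real.log 4 - Real.log x) + (1 / 2 - (x + 1) / (4 * x))

noncomputable def fT2 (x : ℝ) : ℝ := (x ^ 2 + 1) / (4 * x ^ 2 * (x + 1))

noncomputable def phis (s x : ℝ) : ℝ := (x ^ s - s * (x - 1) - 1) / (s * (s - 1))

noncomputable def phis1 (s x : ℝ) : ℝ := (s * x ^ (s - 1) - s) / (s * (s - 1))

noncomputable def eta (s t : ℝ) : ℝ := t ^ (-s) * (1 + t ^ 2) / (4 * (1 + t))

lemma log_four : Real.log 4 = 2 * Real.log 2 := by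
  rw [show (4 : ℝ) = 2 ^ 2 by norm_num, Real.log_pow]
  push_cast; ring

lemma fT_one : fT 1 = 0 := by
  unfold fT
  rw [show (1 : ℝ) + 1 = 2 by norm_num, log_four, Real.log_one]
  ring

lemma fT1_one : fT1 1 = 0 := by
  unfold fT1
  rw [show (1 : ℝ) + 1 = 2 by norm_num, log_four, Real.log_one]
  ring

lemma phis_one (s : ℝ) : phis s 1 = 0 := by simp [phis]

lemma phis1_one (s : ℝ) : phis1 s 1 = 0 := by simp [phis1]

lemma fT_deriv {x : ℝ} (hx : 0 < x) : HasDerivAt fT (fT1 x) x := by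
  have hx1 : (0:ℝ) < x + 1 := by linarith
  have h1 : HasDerivAt (fun y : ℝ => (y + 1) / 4) (1 / 4) x := by
    simpa using ((hasDerivAt_id x).add_const 1).div_const 4
  have hlog1 : HasDerivAt (fun y : ℝ => Real.log (y + 1)) (1 / (x + 1)) x := by
    simpa using ((hasDerivAt_id x).add_const 1).log hx1.ne'
  have h2 : HasDerivAt (fun y : ℝ => 2 * Real.log (y + 1) - Real.log 4 - Real.log y)
      (2 * (1 / (x + 1)) - 1 / x) x := by
    have := (hlog1.const_mul 2).sub_const (Real.log 4)
    exact (this.sub (Real.hasDerivAt_log hx.ne')).congr_deriv (by ring)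
  have h := h1.mul h2
  have e : 1 / 4 * (2 * Real.log (x + 1) - Real.log 4 - Real.log x) +
      (x + 1) / 4 * (2 * (1 / (x + 1)) - 1 / x) = fT1 x := by
    unfold fT1; field_simp; ring
  rw [e] at h
  exact h

lemma fT1_deriv {x : ℝ} (hx : 0 < x) : HasDerivAt fT1 (fT2 x) x := by
  have hx1 : (0:ℝ) < x + 1 := by linarith
  have hlog1 : HasDerivAt (fun y : ℝ => Real.log (y + 1)) (1 / (x + 1)) x := by
    simpa using ((hasDerivAt_id x).add_const 1).log hx1.ne'
  have h2 : HasDerivAt (fun y : ℝ => 2 * Real.log (y + 1) - Real.log 4 - Real.log y)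
      (2 * (1 / (x + 1)) - 1 / x) x := by
    have := (hlog1.const_mul 2).sub_const (Real.log 4)
    exact (this.sub (Real.hasDerivAt_log hx.ne')).congr_deriv (by ring)
  have hA := h2.const_mul (1/4 : ℝ)
  have hnum : HasDerivAt (fun y : ℝ => y + 1) 1 x := by
    simpa using (hasDerivAt_id x).add_const 1
  have hden : HasDerivAt (fun y : ℝ => 4 * y) 4 x := by
    simpa using (hasDerivAt_id x).const_mul 4
  have hB : HasDerivAt (fun y : ℝ => (y + 1) / (4 * y))
      ((1 * (4 * x) - (x + 1) * 4) / (4 * x) ^ 2) x :=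
    hnum.div hden (by positivity)
  have hC : HasDerivAt (fun y : ℝ => 1 / 2 - (y + 1) / (4 * y))
      (0 - (1 * (4 * x) - (x + 1) * 4) / (4 * x) ^ 2) x :=
    (hasDerivAt_const x (1/2 : ℝ)).sub hB
  have h := hA.add hC
  have e : 1 / 4 * (2 * (1 / (x + 1)) - 1 / x) +
      (0 - (1 * (4 * x) - (x + 1) * 4) / (4 * x) ^ 2) = fT2 x := by
    unfold fT2; field_simp; ring
  rw [e] at h
  exact h

lemma phis_deriv {s : ℝ} (x : ℝ) (hx : 0 < x) : HasDerivAt (phis s) (phis1 s x) x := by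
  have h1 : HasDerivAt (fun y : ℝ => y ^ s) (s * x ^ (s - 1)) x :=
    Real.hasDerivAt_rpow_const (Or.inl hx.ne')
  have h2 : HasDerivAt (fun y : ℝ => s * (y - 1)) s x := by
    simpa using ((hasDerivAt_id x).sub_const 1).const_mul s
  have h := ((h1.sub h2).sub_const 1).div_const (s * (s - 1))
  exact h

lemma phis1_deriv {s : ℝ} (hs : s * (s - 1) ≠ 0) (x : ℝ) (hx : 0 < x) :
    HasDerivAt (phis1 s) (x ^ (s - 2)) x := by
  have h1 : HasDerivAt (fun y : ℝ => y ^ (s - 1)) ((s - 1) * x ^ (s - 1 - 1)) x :=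
    Real.hasDerivAt_rpow_const (Or.inl hx.ne')
  have h := (((h1.const_mul s).sub_const s).div_const (s * (s - 1)))
  have e2 : s * ((s - 1) * x ^ (s - 1 - 1)) / (s * (s - 1)) = x ^ (s - 2) := by
    rw [show s - 1 - 1 = s - 2 by ring]
    rw [← mul_assoc, mul_comm (s * (s - 1)), mul_div_assoc, div_self hs, mul_one]
  rw [e2] at h
  exact h

lemma key_nonneg {lo hi : ℝ} (hlo : 0 < lo) (hl1 : lo ≤ 1) (h1h : 1 ≤ hi)
    (g g1 g2 : ℝ → ℝ)
    (hd1 : ∀ x ∈ Set.Icc lo hi, HasDerivAt g (g1 x) x)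
    (hd2 : ∀ x ∈ Set.Icc lo hi, HasDerivAt g1 (g2 x) x)
    (hpos : ∀ x ∈ Set.Icc lo hi, 0 ≤ g2 x)
    (hg1 : g 1 = 0) (hg1' : g1 1 = 0)
    {x : ℝ} (hx : x ∈ Set.Icc lo hi) : 0 ≤ g x := by
  have h1mem : (1 : ℝ) ∈ Set.Icc lo hi := ⟨hl1, h1h⟩
  have hmono : MonotoneOn g1 (Set.Icc lo hi) := by
    apply monotoneOn_of_deriv_nonneg (convex_Icc lo hi)
    · exact fun y hy => (hd2 y hy).continuousAt.continuousWithinAt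
    · intro y hy
      exact (hd2 y (interior_subset hy)).differentiableAt.differentiableWithinAt
    · intro y hy
      rw [(hd2 y (interior_subset hy)).deriv]
      exact hpos y (interior_subset hy)
  rcases le_total 1 x with hx1 | hx1
  · have hmg : MonotoneOn g (Set.Icc 1 hi) := by
      apply monotoneOn_of_deriv_nonneg (convex_Icc 1 hi)
      · intro y hy
        exact (hd1 y ⟨le_trans hl1 hy.1, hy.2⟩).continuousAt.continuousWithinAt
      · intro y hy
        have hy' : y ∈ Set.Icc lo hi :=
          ⟨le_trans hl1 (interior_subset hy).1, (interior_subset hy).2⟩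
        exact (hd1 y hy').differentiableAt.differentiableWithinAt
      · intro y hy
        have hy' : y ∈ Set.Icc lo hi :=
          ⟨le_trans hl1 (interior_subset hy).1, (interior_subset hy).2⟩
        rw [(hd1 y hy').deriv]
        have := hmono h1mem hy' (interior_subset hy).1
        rw [hg1'] at this
        exact this
    have := hmg ⟨le_refl 1, h1h⟩ ⟨hx1, hx.2⟩ hx1
    rwa [hg1] at this
  · have hmg : AntitoneOn g (Set.Icc lo 1) := by
      apply antitoneOn_of_deriv_nonpos (convex_Icc lo 1)
      · intro y hy
        exact (hd1 y ⟨hy.1, le_trans hy.2 h1h⟩).continuousAt.continuousWithinAt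
      · intro y hy
        have hy' : y ∈ Set.Icc lo hi :=
          ⟨(interior_subset hy).1, le_trans (interior_subset hy).2 h1h⟩
        exact (hd1 y hy').differentiableAt.differentiableWithinAt
      · intro y hy
        have hy' : y ∈ Set.Icc lo hi :=
          ⟨(interior_subset hy).1, le_trans (interior_subset hy).2 h1h⟩
        rw [(hd1 y hy').deriv]
        have := hmono hy' h1mem (interior_subset hy).2
        rw [hg1'] at this
        exact this
    have := hmg ⟨hx.1, hx1⟩ ⟨hl1, le_refl 1⟩ hx1
    rwa [hg1] at this

lemma upper_pt {s M : ℝ} (hs : s * (s - 1) ≠ 0) {lo hi : ℝ} (hlo : 0 < lo) (hl1 : lo ≤ 1)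
    (h1h : 1 ≤ hi)
    (hM : ∀ x ∈ Set.Icc lo hi, fT2 x ≤ M * x ^ (s - 2))
    {x : ℝ} (hx : x ∈ Set.Icc lo hi) : fT x ≤ M * phis s x := by
  have h := key_nonneg hlo hl1 h1h (fun y => M * phis s y - fT y)
    (fun y => M * phis1 s y - fT1 y) (fun y => M * y ^ (s - 2) - fT2 y)
    (fun y hy => ((phis_deriv y (lt_of_lt_of_le hlo hy.1)).const_mul M).sub
      (fT_deriv (lt_of_lt_of_le hlo hy.1)))
    (fun y hy => ((phis1_deriv hs y (lt_of_lt_of_le hlo hy.1)).const_mul M).sub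
      (fT1_deriv (lt_of_lt_of_le hlo hy.1)))
    (fun y hy => by have := hM y hy; linarith)
    (by simp [phis_one, fT_one]) (by simp [phis1_one, fT1_one]) hx
  linarith

lemma lower_pt {s m : ℝ} (hs : s * (s - 1) ≠ 0) {lo hi : ℝ} (hlo : 0 < lo) (hl1 : lo ≤ 1)
    (h1h : 1 ≤ hi)
    (hm : ∀ x ∈ Set.Icc lo hi, m * x ^ (s - 2) ≤ fT2 x)
    {x : ℝ} (hx : x ∈ Set.Icc lo hi) : m * phis s x ≤ fT x := by
  have h := key_nonneg hlo hl1 h1h (fun y => fT y - m * phis s y)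
    (fun y => fT1 y - m * phis1 s y) (fun y => fT2 y - m * y ^ (s - 2))
    (fun y hy => (fT_deriv (lt_of_lt_of_le hlo hy.1)).sub
      ((phis_deriv y (lt_of_lt_of_le hlo hy.1)).const_mul m))
    (fun y hy => (fT1_deriv (lt_of_lt_of_le hlo hy.1)).sub
      ((phis1_deriv hs y (lt_of_lt_of_le hlo hy.1)).const_mul m))
    (fun y hy => by have := hm y hy; linarith)
    (by simp [phis_one, fT_one]) (by simp [phis1_one, fT1_one]) hx
  linarith

lemma eta_eq1 (s : ℝ) {x : ℝ} (hx : 0 < x) :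
    eta s x = x ^ (-s - 1) * (x * (1 + x ^ 2) / (4 * (1 + x))) := by
  have h : x ^ (-s - 1) * x = x ^ (-s) := by
    rw [← Real.rpow_add_one hx.ne' (-s - 1)]; norm_num
  unfold eta; rw [← h]; ring

lemma eta_eq2 (s : ℝ) {x : ℝ} (hx : 0 < x) :
    eta s x = x ^ (2 - s) * ((1 + x ^ 2) / (x ^ 2 * (4 * (1 + x)))) := by
  have h2 : x ^ ((-2 : ℝ)) = (x ^ 2)⁻¹ := by
    rw [Real.rpow_neg hx.le, Real.rpow_two]
  have h : x ^ (2 - s) * (x ^ 2)⁻¹ = x ^ (-s) := by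
    rw [← h2, ← Real.rpow_add hx, show (2 - s + -2 : ℝ) = -s by ring]
  unfold eta
  rw [← h]
  field_simp

lemma fT2_eq (s : ℝ) {x : ℝ} (hx : 0 < x) : fT2 x = eta s x * x ^ (s - 2) := by
  have h : x ^ (-s) * x ^ (s - 2) = (x ^ 2)⁻¹ := by
    rw [← Real.rpow_add hx, show -s + (s - 2) = (-2 : ℝ) by ring, Real.rpow_neg hx.le,
      Real.rpow_two]
  have e : eta s x * x ^ (s - 2) = (x ^ (-s) * x ^ (s - 2)) * ((1 + x ^ 2) / (4 * (1 + x))) := by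
    unfold eta; ring
  rw [e, h]
  unfold fT2
  have hx1 : (0:ℝ) < 1 + x := by linarith
  field_simp
  ring

lemma eta_mono {s x c : ℝ} (hs : s ≤ -1) (hx : 0 < x) (hxc : x ≤ c) : eta s x ≤ eta s c := by
  have hc : 0 < c := hx.trans_le hxc
  rw [eta_eq1 s hx, eta_eq1 s hc]
  have h1 : x ^ (-s - 1) ≤ c ^ (-s - 1) := Real.rpow_le_rpow hx.le hxc (by linarith)
  have h2 : x * (1 + x ^ 2) / (4 * (1 + x)) ≤ c * (1 + c ^ 2) / (4 * (1 + c)) := by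
    rw [div_le_div_iff₀ (by positivity) (by positivity)]
    nlinarith [mul_nonneg (sub_nonneg.2 hxc) (by positivity : (0:ℝ) ≤ c ^ 2 + c * x + x ^ 2),
      mul_nonneg (mul_nonneg (mul_nonneg hx.le hc.le) (sub_nonneg.2 hxc))
        (by positivity : (0:ℝ) ≤ c + x), sub_nonneg.2 hxc]
  exact mul_le_mul h1 h2 (by positivity) (Real.rpow_nonneg hc.le _)

lemma eta_anti {s x c : ℝ} (hs : 2 ≤ s) (hx : 0 < x) (hxc : x ≤ c) : eta s c ≤ eta s x := by
  have hc : 0 < c := hx.trans_le hxc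
  rw [eta_eq2 s hx, eta_eq2 s hc]
  have h1 : c ^ (2 - s) ≤ x ^ (2 - s) := Real.rpow_le_rpow_of_nonpos hx hxc (by linarith)
  have h2 : (1 + c ^ 2) / (c ^ 2 * (4 * (1 + c))) ≤ (1 + x ^ 2) / (x ^ 2 * (4 * (1 + x))) := by
    rw [div_le_div_iff₀ (by positivity) (by positivity)]
    nlinarith [mul_nonneg (sub_nonneg.2 (by nlinarith : x ^ 2 ≤ c ^ 2))
        (by positivity : (0:ℝ) ≤ 1 + x), sub_nonneg.2 hxc, sq_nonneg x, sq_nonneg c,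
      mul_nonneg (sub_nonneg.2 hxc) (by positivity : (0:ℝ) ≤ x ^ 2 + x ^ 2 * c ^ 2)]
  exact mul_le_mul h1 h2 (by positivity) (Real.rpow_nonneg hx.le _)

lemma Phi_eq {n : ℕ} (p q : Fin n → ℝ) (hp : ∀ i, 0 < p i) (hq : ∀ i, 0 < q i)
    (hp1 : ∑ i, p i = 1) (hq1 : ∑ i, q i = 1) (s : ℝ) (hs0 : s ≠ 0) (hs1 : s ≠ 1) :
    Phi s p q = ∑ i, q i * phis s (p i / q i) := by
  have hss : s * (s - 1) ≠ 0 := mul_ne_zero hs0 (sub_ne_zero.2 hs1)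
  unfold Phi
  rw [if_neg hs0, if_neg hs1]
  have key : ∀ i, q i * phis s (p i / q i)
      = (s * (s - 1))⁻¹ * (p i ^ s * q i ^ (1 - s)) - (s * (s - 1))⁻¹ * (s * (p i - q i) + q i) := by
    intro i
    have hqi := hq i; have hpi := hp i
    have h1 : (p i / q i) ^ s = p i ^ s / q i ^ s := Real.div_rpow hpi.le hqi.le s
    have h2 : q i ^ (1 - s) = q i / q i ^ s := by
      rw [Real.rpow_sub hqi, Real.rpow_one]
    have hqs : (0:ℝ) < q i ^ s := Real.rpow_pos_of_pos hqi s
    unfold phis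
    rw [h1, h2]
    field_simp
    ring
  rw [Finset.sum_congr rfl (fun i _ => key i), Finset.sum_sub_distrib,
    ← Finset.mul_sum, ← Finset.mul_sum]
  have h3 : ∑ i, (s * (p i - q i) + q i) = 1 := by
    rw [Finset.sum_add_distrib, ← Finset.mul_sum, Finset.sum_sub_distrib, hp1, hq1]
    ring
  rw [h3]
  ring

lemma AG_eq {n : ℕ} (p q : Fin n → ℝ) (hp : ∀ i, 0 < p i) (hq : ∀ i, 0 < q i) :
    AGdiv p q = ∑ i, q i * fT (p i / q i) := by
  unfold AGdiv relAG
  rw [← Finset.sum_add_distrib, Finset.sum_div]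
  apply Finset.sum_congr rfl
  intro i _
  have hpi := hp i; have hqi := hq i
  have hpq : (0:ℝ) < p i + q i := by linarith
  have hqp : (0:ℝ) < q i + p i := by linarith
  unfold fT
  have e1 : p i / q i + 1 = (p i + q i) / q i := by field_simp
  rw [e1, Real.log_div hpq.ne' hqi.ne', Real.log_div hpi.ne' hqi.ne',
    Real.log_div hpq.ne' (by positivity : (2 * p i) ≠ 0),
    Real.log_div hqp.ne' (by positivity : (2 * q i) ≠ 0),
    Real.log_mul two_ne_zero hpi.ne', Real.log_mul two_ne_zero hqi.ne',
    show q i + p i = p i + q i from add_comm _ _, log_four]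
  field_simp
  ring

theorem stmt16 {n : ℕ} (hn : 2 ≤ n) (p q : Fin n → ℝ)
    (hp : ∀ i, 0 < p i) (hq : ∀ i, 0 < q i)
    (hp1 : ∑ i, p i = 1) (hq1 : ∑ i, q i = 1)
    (r R : ℝ) (hr : 0 < r)
    (hlow : ∀ i, r ≤ p i / q i) (hupp : ∀ i, p i / q i ≤ R) (s : ℝ) :
    (s ≤ -1 →
      (r ^ (-s) * (1 + r ^ 2) / (4 * (1 + r))) * Phi s p q ≤ AGdiv p q ∧
        AGdiv p q ≤ (R ^ (-s) * (1 + R ^ 2) / (4 * (1 + R))) * Phi s p q) ∧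
    (2 ≤ s →
      (R ^ (-s) * (1 + R ^ 2) / (4 * (1 + R))) * Phi s p q ≤ AGdiv p q ∧
        AGdiv p q ≤ (r ^ (-s) * (1 + r ^ 2) / (4 * (1 + r))) * Phi s p q) := by
  have hR1 : (1:ℝ) ≤ R := by
    have h : ∀ i ∈ Finset.univ, p i ≤ R * q i := by
      intro i _
      have := hupp i
      rw [div_le_iff₀ (hq i)] at this
      linarith
    have := Finset.sum_le_sum h
    rw [hp1, ← Finset.mul_sum, hq1, mul_one] at this
    exact this
  have hr1 : r ≤ 1 := by
    have h : ∀ i ∈ Finset.univ, r * q i ≤ p i := by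
      intro i _
      have := hlow i
      rw [le_div_iff₀ (hq i)] at this
      linarith
    have := Finset.sum_le_sum h
    rw [hp1, ← Finset.mul_sum, hq1, mul_one] at this
    exact this
  have hxmem : ∀ i, p i / q i ∈ Set.Icc r R := fun i => ⟨hlow i, hupp i⟩
  have hAG : AGdiv p q = ∑ i, q i * fT (p i / q i) := AG_eq p q hp hq
  constructor
  · intro hs
    have hs0 : s ≠ 0 := by intro h; rw [h] at hs; linarith
    have hs1 : s ≠ 1 := by intro h; rw [h] at hs; linarith
    have hss : s * (s - 1) ≠ 0 := mul_ne_zero hs0 (sub_ne_zero.2 hs1)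
    have hPhi : Phi s p q = ∑ i, q i * phis s (p i / q i) := Phi_eq p q hp hq hp1 hq1 s hs0 hs1
    constructor
    · rw [hAG, hPhi, Finset.mul_sum]
      apply Finset.sum_le_sum
      intro i _
      have key : eta s r * phis s (p i / q i) ≤ fT (p i / q i) := by
        apply lower_pt hss hr hr1 hR1 _ (hxmem i)
        intro x hxI
        have hx0 : 0 < x := lt_of_lt_of_le hr hxI.1
        rw [fT2_eq s hx0]
        exact mul_le_mul_of_nonneg_right (eta_mono hs hr hxI.1)
          (Real.rpow_nonneg hx0.le _)
      calc r ^ (-s) * (1 + r ^ 2) / (4 * (1 + r)) * (q i * phis s (p i / q i))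
          = q i * (eta s r * phis s (p i / q i)) := by unfold eta; ring
        _ ≤ q i * fT (p i / q i) := mul_le_mul_of_nonneg_left key (hq i).le
    · rw [hAG, hPhi, Finset.mul_sum]
      apply Finset.sum_le_sum
      intro i _
      have key : fT (p i / q i) ≤ eta s R * phis s (p i / q i) := by
        apply upper_pt hss hr hr1 hR1 _ (hxmem i)
        intro x hxI
        have hx0 : 0 < x := lt_of_lt_of_le hr hxI.1
        rw [fT2_eq s hx0]
        exact mul_le_mul_of_nonneg_right (eta_mono hs hx0 hxI.2)
          (Real.rpow_nonneg hx0.le _)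
      calc q i * fT (p i / q i) ≤ q i * (eta s R * phis s (p i / q i)) :=
            mul_le_mul_of_nonneg_left key (hq i).le
        _ = R ^ (-s) * (1 + R ^ 2) / (4 * (1 + R)) * (q i * phis s (p i / q i)) := by
            unfold eta; ring
  · intro hs
    have hs0 : s ≠ 0 := by intro h; rw [h] at hs; linarith
    have hs1 : s ≠ 1 := by intro h; rw [h] at hs; linarith
    have hss : s * (s - 1) ≠ 0 := mul_ne_zero hs0 (sub_ne_zero.2 hs1)
    have hPhi : Phi s p q = ∑ i, q i * phis s (p i / q i) := Phi_eq p q hp hq hp1 hq1 s hs0 hs1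
    constructor
    · rw [hAG, hPhi, Finset.mul_sum]
      apply Finset.sum_le_sum
      intro i _
      have key : eta s R * phis s (p i / q i) ≤ fT (p i / q i) := by
        apply lower_pt hss hr hr1 hR1 _ (hxmem i)
        intro x hxI
        have hx0 : 0 < x := lt_of_lt_of_le hr hxI.1
        rw [fT2_eq s hx0]
        exact mul_le_mul_of_nonneg_right (eta_anti hs hx0 hxI.2)
          (Real.rpow_nonneg hx0.le _)
      calc R ^ (-s) * (1 + R ^ 2) / (4 * (1 + R)) * (q i * phis s (p i / q i))
          = q i * (eta s R * phis s (p i / q i)) := by unfold eta; ring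
        _ ≤ q i * fT (p i / q i) := mul_le_mul_of_nonneg_left key (hq i).le
    · rw [hAG, hPhi, Finset.mul_sum]
      apply Finset.sum_le_sum
      intro i _
      have key : fT (p i / q i) ≤ eta s r * phis s (p i / q i) := by
        apply upper_pt hss hr hr1 hR1 _ (hxmem i)
        intro x hxI
        have hx0 : 0 < x := lt_of_lt_of_le hr hxI.1
        rw [fT2_eq s hx0]
        exact mul_le_mul_of_nonneg_right (eta_anti hs hr hxI.1)
          (Real.rpow_nonneg hx0.le _)
      calc q i * fT (p i / q i) ≤ q i * (eta s r * phis s (p i / q i)) :=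
            mul_le_mul_of_nonneg_left key (hq i).le
        _ = r ^ (-s) * (1 + r ^ 2) / (4 * (1 + r)) * (q i * phis s (p i / q i)) := by
            unfold eta; ring
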